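/- arXiv:0809.3924 — 3 statements merged into one kernel-verified Lean document; each statement's English description precedes it below -/
import Mathlib

section
/- The Fourier transform of the Fejér kernel satisfies ∫_ℝ T·(sin(πTv)/(πTv))²·e^{2πiQv} dv = max(1 - |Q|/T, 0) for all real Q and T > 0. -/
/-!
The Fejér kernel `F_T` is the Fourier transform of the tent function `ξ ↦ max (1 - |ξ| / T) 0`:
the tent is even and supported on `[-T, T]`, so its transform reduces to the elementary integral
`2 ∫₀ᵀ (1 - ξ/T) cos (2πvξ) dξ = T sinc² (πTv)`. The tent is continuous and integrable, and so is
`F_T`, being bounded by `2T / (1 + (πTv)²)`; hence Fourier inversion reads the tent back off `F_T`.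
-/

open Real MeasureTheory

/-- The Fejér kernel `F_T(v) = T (sin(πTv)/(πTv))²`, with value `T` at `v = 0`. -/
noncomputable def fejer (T v : ℝ) : ℝ :=
  if v = 0 then T else T * (Real.sin (π * T * v) / (π * T * v)) ^ 2

open FourierTransform

lemma fejer_eq_mul_sinc_sq {T : ℝ} (hT : T ≠ 0) (v : ℝ) :
    fejer T v = T * sinc (π * T * v) ^ 2 := by
  by_cases hv : v = 0
  · simp [fejer, hv]
  · rw [fejer, if_neg hv, sinc_of_ne_zero (by positivity)]

lemma sinc_sq_le_two_div_one_add_sq (x : ℝ) : sinc x ^ 2 ≤ 2 / (1 + x ^ 2) := by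
  have hsinc : sinc x ^ 2 ≤ 1 := (sq_le_one_iff_abs_le_one _).2 (abs_sinc_le_one x)
  have hsin : sinc x ^ 2 * x ^ 2 ≤ 1 := by
    rcases eq_or_ne x 0 with rfl | hx
    · simp
    · rw [sinc_of_ne_zero hx, div_pow, div_mul_cancel₀ _ (pow_ne_zero 2 hx)]
      exact sin_sq_le_one x
  rw [le_div_iff₀ (by positivity), mul_add, mul_one]
  linarith

lemma integrable_sinc_sq : Integrable (fun x => sinc x ^ 2) := by
  refine (integrable_inv_one_add_sq.const_mul 2).mono' (by fun_prop)
    (Filter.Eventually.of_forall fun x => ?_)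
  rw [norm_of_nonneg (sq_nonneg _), ← div_eq_mul_inv]
  exact sinc_sq_le_two_div_one_add_sq x

lemma integrable_fejer {T : ℝ} (hT : T ≠ 0) : Integrable (fejer T) := by
  rw [funext (fejer_eq_mul_sinc_sq hT)]
  exact (integrable_sinc_sq.comp_mul_left' (mul_ne_zero pi_ne_zero hT)).const_mul T

noncomputable def tent (T ξ : ℝ) : ℝ := max (1 - |ξ| / T) 0

lemma tent_neg (T ξ : ℝ) : tent T (-ξ) = tent T ξ := by simp [tent]

lemma tent_of_mem_Icc {T ξ : ℝ} (hT : 0 < T) (hξ : ξ ∈ Set.Icc 0 T) : tent T ξ = 1 - ξ / T := by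
  rw [tent, abs_of_nonneg hξ.1, max_eq_left (sub_nonneg.2 ((div_le_one hT).2 hξ.2))]

lemma tent_eq_zero_of_notMem_Icc {T ξ : ℝ} (hT : 0 < T) (hξ : ξ ∉ Set.Icc (-T) T) :
    tent T ξ = 0 := by
  have hTξ : T ≤ |ξ| := by
    rw [Set.mem_Icc, not_and_or, not_le, not_le] at hξ
    rcases hξ with h | h
    · rw [abs_of_neg (by linarith)]; linarith
    · rw [abs_of_pos (by linarith)]; linarith
  rw [tent, max_eq_right]
  rwa [sub_nonpos, one_le_div hT]

@[fun_prop]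
lemma continuous_tent (T : ℝ) : Continuous (tent T) := by
  unfold tent; fun_prop

lemma integrable_tent {T : ℝ} (hT : 0 < T) : Integrable (tent T) :=
  (continuous_tent T).integrable_of_hasCompactSupport <|
    HasCompactSupport.intro isCompact_Icc fun _ => tent_eq_zero_of_notMem_Icc hT

theorem intervalIntegral.integral_neg_self_eq {E : Type*} [NormedAddCommGroup E]
    [NormedSpace ℝ E] {f : ℝ → E} {a : ℝ} (hf : IntervalIntegrable f volume (-a) a) :
    ∫ x in -a..a, f x = ∫ x in 0..a, (f x + f (-x)) := by
  have h0 : (0 : ℝ) ∈ Set.uIcc (-a) a := by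
    rcases le_total 0 a with h | h <;> simp [h]
  have hl : IntervalIntegrable f volume (-a) 0 := hf.mono_set (Set.uIcc_subset_uIcc_left h0)
  have hr : IntervalIntegrable f volume 0 a := hf.mono_set (Set.uIcc_subset_uIcc_right h0)
  have hl' : IntervalIntegrable (fun x => f (-x)) volume 0 a := by
    simpa using (IntervalIntegrable.iff_comp_neg).mp hl.symm
  rw [integral_add hr hl', integral_comp_neg, neg_zero, add_comm,
    integral_add_adjacent_intervals hl hr]

theorem Real.fourier_eq_intervalIntegral {E : Type*} [NormedAddCommGroup E]
    [NormedSpace ℂ E] {f : ℝ → E} {a b : ℝ} (hab : a ≤ b) (hf : ∀ x ∉ Set.Icc a b, f x = 0)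
    (w : ℝ) :
    𝓕 f w = ∫ x in a..b, Complex.exp (↑(-2 * π * x * w) * Complex.I) • f x := by
  rw [Real.fourier_real_eq_integral_exp_smul,
    ← setIntegral_eq_integral_of_forall_compl_eq_zero fun x hx => by rw [hf x hx, smul_zero],
    integral_Icc_eq_integral_Ioc, intervalIntegral.integral_of_le hab]

lemma integral_one_sub_div_mul_cos {T : ℝ} (hT : T ≠ 0) (a : ℝ) :
    ∫ ξ in 0..T, (1 - ξ / T) * cos (a * ξ) = T / 2 * sinc (a * T / 2) ^ 2 := by
  rcases eq_or_ne a 0 with rfl | ha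
  · simp [intervalIntegral.integral_sub, intervalIntegral.integral_div]
    field_simp
    norm_num
  have hderiv (ξ : ℝ) :
      HasDerivAt (fun ξ => (1 - ξ / T) * sin (a * ξ) / a - cos (a * ξ) / (T * a ^ 2))
        ((1 - ξ / T) * cos (a * ξ)) ξ := by
    have hlin : HasDerivAt (fun ξ : ℝ => a * ξ) a ξ := by
      simpa using (hasDerivAt_id ξ).const_mul a
    refine (((((hasDerivAt_id' ξ).div_const T).const_sub 1).fun_mul hlin.sin).div_const a
      |>.fun_sub (hlin.cos.div_const (T * a ^ 2))).congr_deriv ?_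
    field_simp
    ring
  have hcos : cos (a * T) = 1 - 2 * sin (a * T / 2) ^ 2 := by
    have := cos_two_mul (a * T / 2)
    rw [mul_div_cancel₀ _ two_ne_zero] at this
    linear_combination this + 2 * sin_sq_add_cos_sq (a * T / 2)
  rw [intervalIntegral.integral_eq_sub_of_hasDerivAt (fun ξ _ => hderiv ξ)
      (by apply Continuous.intervalIntegrable; fun_prop),
    sinc_of_ne_zero (by positivity)]
  simp only [div_self hT, sub_self, zero_mul, zero_div, mul_zero, sin_zero, cos_zero, hcos]
  field_simp
  ring

lemma fourier_tent {T : ℝ} (hT : 0 < T) :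
    𝓕 (fun ξ => (tent T ξ : ℂ)) = fun v => (fejer T v : ℂ) := by
  ext v
  have hsymm (ξ : ℝ) : Complex.exp (↑(-2 * π * ξ * v) * Complex.I) • (tent T ξ : ℂ) +
      Complex.exp (↑(-2 * π * -ξ * v) * Complex.I) • (tent T (-ξ) : ℂ)
        = ((2 * (tent T ξ * cos (2 * π * v * ξ)) : ℝ) : ℂ) := by
    have h2cos : Complex.exp (↑(-2 * π * ξ * v) * Complex.I) +
        Complex.exp (↑(-2 * π * -ξ * v) * Complex.I) = 2 * Complex.cos ↑(2 * π * v * ξ) := by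
      rw [Complex.two_cos, add_comm]
      congr 2 <;> push_cast <;> ring
    rw [tent_neg, smul_eq_mul, smul_eq_mul]
    push_cast at h2cos ⊢
    linear_combination (tent T ξ : ℂ) * h2cos
  rw [Real.fourier_eq_intervalIntegral (a := -T) (by linarith)
      (fun ξ hξ => by rw [tent_eq_zero_of_notMem_Icc hT hξ, Complex.ofReal_zero]),
    intervalIntegral.integral_neg_self_eq (by apply Continuous.intervalIntegrable; fun_prop)]
  simp_rw [hsymm]
  rw [intervalIntegral.integral_ofReal,
    intervalIntegral.integral_congr fun ξ hξ => by
      rw [tent_of_mem_Icc hT (Set.uIcc_of_le hT.le ▸ hξ)],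
    intervalIntegral.integral_const_mul, integral_one_sub_div_mul_cos hT.ne',
    fejer_eq_mul_sinc_sq hT.ne', show 2 * π * v * T / 2 = π * T * v by ring]
  push_cast
  ring

theorem stmt1 (T : ℝ) (hT : 0 < T) (Q : ℝ) :
    (∫ v : ℝ, (fejer T v : ℂ) * Complex.exp (2 * π * Complex.I * ((Q * v : ℝ) : ℂ)))
      = (max (1 - |Q| / T) 0 : ℝ) := by
  have hinv := (by fun_prop : Continuous fun ξ => (tent T ξ : ℂ)).fourierInv_fourier_eq
    (integrable_tent hT).ofReal (by rw [fourier_tent hT]; exact (integrable_fejer hT.ne').ofReal)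
  rw [fourier_tent hT] at hinv
  calc _ = 𝓕⁻ (fun v => (fejer T v : ℂ)) Q := by
        rw [Real.fourierInv_eq']
        congr 1 with v
        rw [smul_eq_mul, mul_comm, Real.inner_apply]
        congr 2
        push_cast
        ring
    _ = tent T Q := congrFun hinv Q
end

section
/- For ℓ a positive integer and n a positive integer, define θ_ℓ(n) = ∑ h^{1/2}/(2k-h)^{1/2} · (1 - h/(2k-h))^{ℓ-1}, the sum being over pairs of positive integers (h,k) with k > h and h(2k-h) = n. Then θ_ℓ(n) is bounded below by a positive constant (depending only on ℓ) times the number of factorizations n = hm with positive integers h, m satisfying 3h < m ≤ 4h and h ≡ m (mod 2). -/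
open Real

/-- `θ_ℓ(n) = ∑_{k>h, h(2k-h)=n} h^{1/2}/(2k-h)^{1/2} · (1 - h/(2k-h))^{ℓ-1}`,
the sum running over pairs of positive integers `(h,k)` with `k > h`. -/
noncomputable def theta (ℓ n : ℕ) : ℝ :=
  ∑ p ∈ (Finset.Icc 1 n ×ˢ Finset.Icc 1 n).filter
      (fun p : ℕ × ℕ => p.1 < p.2 ∧ p.1 * (2 * p.2 - p.1) = n),
    (p.1 : ℝ) ^ (1 / 2 : ℝ) / ((2 * p.2 - p.1 : ℕ) : ℝ) ^ (1 / 2 : ℝ)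
      * (1 - (p.1 : ℝ) / ((2 * p.2 - p.1 : ℕ) : ℝ)) ^ (ℓ - 1)

/-- The number of factorizations `n = h·m` with `3h < m ≤ 4h` and `h ≡ m (mod 2)`. -/
def goodFactorizations (n : ℕ) : ℕ :=
  ((Nat.divisorsAntidiagonal n).filter
    (fun p : ℕ × ℕ => 3 * p.1 < p.2 ∧ p.2 ≤ 4 * p.1 ∧ p.1 % 2 = p.2 % 2)).card

/-!
A good factorization `n = h·m` yields the pair `(h, k) = (h, (h+m)/2)` of the sum defining
`θ_ℓ(n)`, with `2k - h = m`, and distinct factorizations give distinct pairs. Its term is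
`(h/m)^{1/2} (1 - h/m)^{ℓ-1}`, which is at least `1/2 · (2/3)^{ℓ-1}` because `3h ≤ m ≤ 4h`;
all other terms are nonnegative.
-/

open Finset

theorem Finset.card_nsmul_le_sum_of_injOn {ι κ M : Type*} [DecidableEq κ] [AddCommMonoid M]
    [PartialOrder M] [IsOrderedAddMonoid M] {s : Finset ι} {t : Finset κ} {φ : ι → κ} {f : κ → M} {c : M}
    (hφ : Set.MapsTo φ s t) (hinj : Set.InjOn φ s) (hf : ∀ y ∈ t, 0 ≤ f y)
    (hc : ∀ x ∈ s, c ≤ f (φ x)) :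
    #s • c ≤ ∑ y ∈ t, f y :=
  calc #s • c ≤ ∑ x ∈ s, f (φ x) := card_nsmul_le_sum _ _ _ hc
    _ = ∑ y ∈ s.image φ, f y := (sum_image hinj).symm
    _ ≤ ∑ y ∈ t, f y :=
      sum_le_sum_of_subset_of_nonneg (image_subset_iff.2 hφ) fun y hy _ ↦ hf y hy

lemma half_le_rpow_half_div_rpow_half {x y : ℝ} (hy : 0 < y) (hyx : y ≤ 4 * x) :
    1 / 2 ≤ x ^ (1 / 2 : ℝ) / y ^ (1 / 2 : ℝ) := by
  rw [← sqrt_eq_rpow, ← sqrt_eq_rpow, le_div_iff₀ (sqrt_pos.2 hy)]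
  calc 1 / 2 * √y ≤ 1 / 2 * √(2 ^ 2 * x) := by gcongr; linarith
    _ = √x := by rw [sqrt_mul' _ (by linarith), sqrt_sq zero_le_two]; ring

lemma two_thirds_le_one_sub_div {x y : ℝ} (hy : 0 < y) (hxy : 3 * x ≤ y) :
    2 / 3 ≤ 1 - x / y := by
  have : x / y ≤ 1 / 3 := by rw [div_le_div_iff₀ hy three_pos]; linarith
  linarith

def thetaIndex (n : ℕ) : Finset (ℕ × ℕ) :=
  (Icc 1 n ×ˢ Icc 1 n).filter (fun p : ℕ × ℕ => p.1 < p.2 ∧ p.1 * (2 * p.2 - p.1) = n)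

noncomputable def thetaTerm (ℓ h m : ℕ) : ℝ :=
  (h : ℝ) ^ (1 / 2 : ℝ) / (m : ℝ) ^ (1 / 2 : ℝ) * (1 - (h : ℝ) / (m : ℝ)) ^ (ℓ - 1)

lemma theta_eq_sum_thetaTerm (ℓ n : ℕ) :
    theta ℓ n = ∑ p ∈ thetaIndex n, thetaTerm ℓ p.1 (2 * p.2 - p.1) := rfl

lemma thetaTerm_nonneg (ℓ : ℕ) {h m : ℕ} (hhm : h ≤ m) : 0 ≤ thetaTerm ℓ h m := by
  have : (h : ℝ) / m ≤ 1 := div_le_one_of_le₀ (by exact_mod_cast hhm) m.cast_nonneg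
  have : 0 ≤ 1 - (h : ℝ) / m := by linarith
  unfold thetaTerm
  positivity

lemma le_thetaTerm (ℓ : ℕ) {h m : ℕ} (hh : 0 < h) (h3 : 3 * h ≤ m) (h4 : m ≤ 4 * h) :
    1 / 2 * (2 / 3) ^ (ℓ - 1) ≤ thetaTerm ℓ h m := by
  have hm : (0 : ℝ) < m := by exact_mod_cast (show 0 < m by omega)
  unfold thetaTerm
  gcongr ?_ * ?_ ^ _
  · exact half_le_rpow_half_div_rpow_half hm (by exact_mod_cast h4)
  · exact two_thirds_le_one_sub_div hm (by exact_mod_cast h3)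

lemma mem_thetaIndex {n h m : ℕ} (hmul : h * m = n) (hh : 0 < h) (hhm : h < m)
    (hpar : h % 2 = m % 2) : (h, (h + m) / 2) ∈ thetaIndex n := by
  have hk : 2 * ((h + m) / 2) - h = m := by omega
  have hhn : h ≤ n := hmul ▸ Nat.le_mul_of_pos_right h (by omega)
  have hmn : m ≤ n := hmul ▸ Nat.le_mul_of_pos_left m hh
  simp only [thetaIndex, mem_filter, mem_product, mem_Icc, hk, hmul, and_true]
  omega

theorem stmt5_general (ℓ : ℕ) :
    ∃ c > (0 : ℝ), ∀ n : ℕ, 1 ≤ n →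
      c * (goodFactorizations n : ℝ) ≤ theta ℓ n := by
  refine ⟨1 / 2 * (2 / 3) ^ (ℓ - 1), by positivity, fun n _ ↦ ?_⟩
  rw [mul_comm, ← nsmul_eq_mul, goodFactorizations, theta_eq_sum_thetaTerm]
  refine card_nsmul_le_sum_of_injOn (φ := fun p ↦ (p.1, (p.1 + p.2) / 2)) ?_ ?_ ?_ ?_
  · rintro ⟨h, m⟩ hp
    simp only [coe_filter, Set.mem_ofPred_eq, Nat.mem_divisorsAntidiagonal] at hp
    obtain ⟨⟨hmul, -⟩, h3, h4, hpar⟩ := hp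
    exact mem_thetaIndex hmul (by omega) (by omega) hpar
  · rintro ⟨h, m⟩ hp ⟨h', m'⟩ hp' he
    simp only [coe_filter, Set.mem_ofPred_eq, Prod.mk.injEq] at hp hp' he
    ext <;> omega
  · exact fun p hp ↦ thetaTerm_nonneg ℓ (by simp only [thetaIndex, mem_filter] at hp; omega)
  · rintro ⟨h, m⟩ hp
    simp only [mem_filter] at hp
    obtain ⟨-, h3, h4, hpar⟩ := hp
    rw [show 2 * ((h + m) / 2) - h = m by omega]
    exact le_thetaTerm ℓ (by omega) h3.le h4

theorem stmt5 (ℓ : ℕ) (hℓ : 1 ≤ ℓ) :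
    ∃ c > (0 : ℝ), ∀ n : ℕ, 1 ≤ n →
      c * (goodFactorizations n : ℝ) ≤ theta ℓ n :=
  stmt5_general ℓ
end

section
/- For ρ(ξ) = πξ(1−ξ)cot(πξ) + ξ on (0,1), one has 0 < ρ(ξ) ≤ 1 for all ξ ∈ (0,1); consequently the Vaaler coefficients α_{h,H} = ρ(h/(H+1))/(πh) satisfy 0 < α_{h,H} ≤ 1/(πh), and for h ≤ H/2 one has α_{h,H} ≥ c/h for an absolute constant c > 0. -/
open Real

/-- Vaaler's function `ρ(ξ) = πξ(1-ξ)cot(πξ) + ξ`. -/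
noncomputable def vaalerRho (ξ : ℝ) : ℝ :=
  π * ξ * (1 - ξ) * (Real.cos (π * ξ) / Real.sin (π * ξ)) + ξ

/-!
Write `x cot x` for `x * cos x / sin x`. On `(0, π)` one has `x cot x < 1` (from `x < tan x` below
`π/2`, trivially beyond), and on `(0, π/2]` the bounds `cos x ≥ 1 - 2x/π`, `sin x ≤ x` give
`x cot x ≥ 1 - 2x/π`. The identities
`ρ(ξ) = 1 - (1 - ξ)(1 - πξ cot πξ)` and `ρ(ξ) = ξ (1 - π(1-ξ) cot π(1-ξ))`
turn the first bound into `0 < ρ < 1` on `(0, 1)`, and the second into `ρ ≥ 1 - 2ξ(1-ξ) ≥ 1/2`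
on `(0, 1/2]`. Since `h ≤ H/2` forces `h/(H+1) ≤ 1/2`, this gives `α_{h,H} ≥ 1/(2πh)`.
-/

namespace Real

lemma mul_cos_div_sin_lt_one {x : ℝ} (hx₀ : 0 < x) (hxπ : x < π) : x * cos x / sin x < 1 := by
  have hsin : 0 < sin x := sin_pos_of_pos_of_lt_pi hx₀ hxπ
  rw [div_lt_one hsin]
  rcases lt_or_ge x (π / 2) with hx | hx
  · have hcos : 0 < cos x := cos_pos_of_mem_Ioo ⟨by linarith, hx⟩
    have htan : x < sin x / cos x := tan_eq_sin_div_cos x ▸ lt_tan hx₀ hx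
    rwa [lt_div_iff₀ hcos] at htan
  · have hcos : cos x ≤ 0 := cos_nonpos_of_pi_div_two_le_of_le hx (by linarith)
    nlinarith

lemma one_sub_mul_le_mul_cos_div_sin {x : ℝ} (hx₀ : 0 < x) (hx : x ≤ π / 2) :
    1 - 2 / π * x ≤ x * cos x / sin x := by
  have hsin : 0 < sin x := sin_pos_of_pos_of_lt_pi hx₀ (by linarith [pi_pos])
  have hcos : 1 - 2 / π * x ≤ cos x := one_sub_mul_le_cos hx₀.le hx
  have hlin : 0 ≤ 1 - 2 / π * x := by
    rw [sub_nonneg, div_mul_eq_mul_div, div_le_one pi_pos]; linarith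
  rw [le_div_iff₀ hsin]
  calc (1 - 2 / π * x) * sin x ≤ (1 - 2 / π * x) * x :=
        mul_le_mul_of_nonneg_left (sin_le hx₀.le) hlin
    _ ≤ cos x * x := mul_le_mul_of_nonneg_right hcos hx₀.le
    _ = x * cos x := mul_comm _ _

end Real

lemma vaalerRho_eq_one_sub (ξ : ℝ) :
    vaalerRho ξ = 1 - (1 - ξ) * (1 - π * ξ * cos (π * ξ) / sin (π * ξ)) := by
  unfold vaalerRho; ring

lemma vaalerRho_eq_mul (ξ : ℝ) :
    vaalerRho ξ = ξ * (1 - π * (1 - ξ) * cos (π * (1 - ξ)) / sin (π * (1 - ξ))) := by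
  rw [show π * (1 - ξ) = π - π * ξ by ring, cos_pi_sub, sin_pi_sub]
  unfold vaalerRho; ring

lemma vaalerRho_pos {ξ : ℝ} (h₀ : 0 < ξ) (h₁ : ξ < 1) : 0 < vaalerRho ξ := by
  have := mul_cos_div_sin_lt_one (x := π * (1 - ξ)) (by nlinarith [pi_pos])
    (by nlinarith [pi_pos])
  rw [vaalerRho_eq_mul]
  exact mul_pos h₀ (by linarith)

lemma vaalerRho_lt_one {ξ : ℝ} (h₀ : 0 < ξ) (h₁ : ξ < 1) : vaalerRho ξ < 1 := by
  have := mul_cos_div_sin_lt_one (x := π * ξ) (by positivity) (by nlinarith [pi_pos])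
  rw [vaalerRho_eq_one_sub]
  nlinarith

lemma one_half_le_vaalerRho {ξ : ℝ} (h₀ : 0 < ξ) (h₁ : ξ ≤ 1 / 2) : 1 / 2 ≤ vaalerRho ξ := by
  have hcot := one_sub_mul_le_mul_cos_div_sin (x := π * ξ) (by positivity) (by nlinarith [pi_pos])
  rw [← mul_assoc, div_mul_cancel₀ _ pi_ne_zero] at hcot
  rw [vaalerRho_eq_one_sub]
  nlinarith

theorem stmt16 :
    (∀ ξ ∈ Set.Ioo (0 : ℝ) 1, 0 < vaalerRho ξ ∧ vaalerRho ξ ≤ 1) ∧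
    ∃ c > (0 : ℝ), ∀ H : ℕ, 1 ≤ H → ∀ h : ℕ, 1 ≤ h → h ≤ H →
      0 < vaalerRho ((h : ℝ) / ((H : ℝ) + 1)) / (π * (h : ℝ)) ∧
      vaalerRho ((h : ℝ) / ((H : ℝ) + 1)) / (π * (h : ℝ)) ≤ 1 / (π * (h : ℝ)) ∧
      (2 * h ≤ H →
        c / (h : ℝ) ≤ vaalerRho ((h : ℝ) / ((H : ℝ) + 1)) / (π * (h : ℝ))) := by
  refine ⟨fun ξ ⟨h₀, h₁⟩ => ⟨vaalerRho_pos h₀ h₁, (vaalerRho_lt_one h₀ h₁).le⟩,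
    1 / (2 * π), by positivity, fun H _ h hh hhH => ?_⟩
  have hh' : (1 : ℝ) ≤ h := by exact_mod_cast hh
  have hhH' : (h : ℝ) ≤ H := by exact_mod_cast hhH
  have hden : (0 : ℝ) < H + 1 := by positivity
  have hπh : 0 < π * h := by positivity
  have hξ₀ : 0 < (h : ℝ) / (H + 1) := by positivity
  have hξ₁ : (h : ℝ) / (H + 1) < 1 := by rw [div_lt_one hden]; linarith
  refine ⟨div_pos (vaalerRho_pos hξ₀ hξ₁) hπh,
    div_le_div_of_nonneg_right (vaalerRho_lt_one hξ₀ hξ₁).le hπh.le, fun h2h => ?_⟩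
  have h2h' : 2 * (h : ℝ) ≤ H := by exact_mod_cast h2h
  have hξ : (h : ℝ) / (H + 1) ≤ 1 / 2 := by rw [div_le_iff₀ hden]; linarith
  calc 1 / (2 * π) / h = (1 / 2) / (π * h) := by field_simp
    _ ≤ _ := div_le_div_of_nonneg_right (one_half_le_vaalerRho hξ₀ hξ) hπh.le
end
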